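/- Let f : ℕ → ℕ satisfy f(0) = c and f(x+1) = f(x) + (ℓ(x+1) - ℓ(x))·(2^{ℓ(k)} - 1)·f(x) for a fixed k ≥ 1. Then for all x, f(x) = 2^{ℓ(k)·ℓ(x)} · c, i.e., the wk-ODE₂ schema with initial value c computes left-shifting of c by ℓ(k)·ℓ(x) binary digits. -/

import Mathlib

def ell (x : ℕ) : ℕ := Nat.clog 2 (x + 1)

lemma ell_mono {a b : ℕ} (h : a ≤ b) : ell a ≤ ell b :=
  Nat.clog_mono_right 2 (by omega)

lemma ell_succ_le (x : ℕ) : ell (x + 1) ≤ ell x + 1 := by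
  unfold ell
  rw [Nat.clog_le_iff_le_pow (by norm_num)]
  have h := Nat.le_pow_clog (b := 2) (by norm_num) (x + 1)
  calc x + 2 ≤ 2 * (x + 1) := by omega
    _ ≤ 2 * 2 ^ Nat.clog 2 (x + 1) := by omega
    _ = 2 ^ (Nat.clog 2 (x + 1) + 1) := by ring

/-- The wk-ODE₂ schema with initial value `c` computes left-shifting of `c`
by `ℓ(k)·ℓ(x)` binary digits. -/
theorem wkODE2_shift (c k : ℕ) (hk : 1 ≤ k) (f : ℕ → ℕ) (h0 : f 0 = c)
    (hrec : ∀ x, f (x + 1) = f x + (ell (x + 1) - ell x) * ((2 ^ ell k - 1) * f x)) :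
    ∀ x, f x = 2 ^ (ell k * ell x) * c := by
  intro x
  induction x with
  | zero => simp [ell, h0]
  | succ n ih =>
    have hmono : ell n ≤ ell (n+1) := ell_mono (Nat.le_succ n)
    have hle := ell_succ_le n
    have hpos : 1 ≤ 2 ^ ell k := Nat.one_le_two_pow
    rcases Nat.lt_or_ge (ell n) (ell (n + 1)) with h | h
    · have he : ell (n + 1) = ell n + 1 := by omega
      rw [hrec, ih, he]
      have : ell n + 1 - ell n = 1 := by omega
      rw [this, one_mul]
      obtain ⟨m, hm⟩ := Nat.exists_eq_add_of_le hpos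
      rw [Nat.mul_add, pow_add, hm, Nat.add_sub_cancel_left]
      ring_nf
      rw [hm]
      ring
    · have he : ell (n + 1) = ell n := by omega
      rw [hrec, ih, he]
      simp
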